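/- arXiv:1501.03774 — 4 statements merged into one kernel-verified Lean document; each statement's English description precedes it below -/
import Mathlib

section
/- Let r ≥ 2 be a real number and G a graph. Then G admits a circular nowhere-zero r-flow if and only if G admits an r-MCNZF. Moreover, if f is an r-MCNZF on a reference orientation D₀ of G, then there exist an orientation D of G and a real-valued circular nowhere-zero r-flow g on D such that for every edge e of G, g(e) ≡ f_D(e) (mod r), where f_D(e) = f(e) if e has the same direction in D₀ and D, and f_D(e) = −f(e) otherwise. -/
/-!
Read the modular flow in the reference orientation and pick representatives `t e ∈ [1, r - 1]`.
The real boundary of `t` is then a multiple of `r` at every vertex, so `y = t / r` takes values in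
`[0, 1]` and has integral boundary. Sending the mass `y e` of each edge to its source and
`1 - y e` to its target gives integral vertex loads, and Hall's theorem rounds this fractional
assignment of edges to endpoints to an integral one with the same loads: a `0/1`-vector `x`
with the boundary of `y`. Now `t - r x` is a real flow with values in `±[1, r - 1]`, and
reversing the edges with `x e = 1` gives the circular nowhere-zero `r`-flow.
-/

open Finset


open Finset

/-- A finite multigraph given with a reference orientation: each edge `e` goes
from `src e` to `tgt e`.  An orientation of the graph is a sign function
`σ : E → ℤˣ` telling, for each edge, whether it keeps (`1`) or reverses (`-1`)
its reference direction. -/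
structure Multigraph where
  V : Type
  E : Type
  [fintV : Fintype V]
  [fintE : Fintype E]
  [decV : DecidableEq V]
  [decE : DecidableEq E]
  src : E → V
  tgt : E → V

attribute [instance] Multigraph.fintV Multigraph.fintE Multigraph.decV Multigraph.decE

/-- `f` is a flow with respect to the reference orientation: at every vertex the
sum over outgoing edges equals the sum over incoming edges. -/
def Multigraph.IsFlow (G : Multigraph) {M : Type*} [AddCommMonoid M] (f : G.E → M) : Prop :=
  ∀ v : G.V,
    ∑ e ∈ Finset.univ.filter (fun e => G.src e = v), f e =
    ∑ e ∈ Finset.univ.filter (fun e => G.tgt e = v), f e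

/-- `f` is a flow on the orientation `σ` of `G` (values of `f` are read in the
direction given by `σ`). -/
def Multigraph.IsFlowOn (G : Multigraph) {M : Type*} [AddCommGroup M]
    (σ : G.E → ℤˣ) (f : G.E → M) : Prop :=
  G.IsFlow (fun e => ((σ e : ℤ) • f e))

/-- The open interval `(a,b)` of `ℝ/rℤ`: the points traversed strictly clockwise
from `a` to `b`, with the convention `(a,a) = ℝ/rℤ \ {a}`. -/
noncomputable def openArc (r a b : ℝ) : Set (AddCircle r) :=
  (fun t : ℝ => (t : AddCircle r)) '' Set.Ioo a (a + (r - Int.fract ((a - b) / r) * r))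

/-- The closed interval `[a,b]` of `ℝ/rℤ`: the points traversed clockwise from
`a` to `b`, endpoints included, with the convention `[a,a] = {a}`. -/
noncomputable def closedArc (r a b : ℝ) : Set (AddCircle r) :=
  (fun t : ℝ => (t : AddCircle r)) '' Set.Icc a (a + Int.fract ((b - a) / r) * r)

/-- `G` has a circular nowhere-zero `r`-flow: an orientation together with a
real-valued flow all of whose values lie in `[1, r-1]`. -/
def Multigraph.HasCNZF (G : Multigraph) (r : ℝ) : Prop :=
  ∃ (σ : G.E → ℤˣ) (f : G.E → ℝ), G.IsFlowOn σ f ∧ ∀ e, f e ∈ Set.Icc (1:ℝ) (r - 1)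

/-- The circular flow number of `G`, as an extended real (`⊤` if `G` admits no
circular nowhere-zero `r`-flow for any `r`, e.g. if `G` has a bridge). -/
noncomputable def circFlowNumber (G : Multigraph) : EReal :=
  sInf {x : EReal | ∃ r : ℝ, x = (r : EReal) ∧ G.HasCNZF r}

/-- The graph `G ∪ e₀` obtained from `G` by adding one extra edge `e₀ = none`
joining `u` to `v`. -/
def Multigraph.addEdge (G : Multigraph) (u v : G.V) : Multigraph where
  V := G.V
  E := Option G.E
  src := fun e => e.elim u G.src
  tgt := fun e => e.elim v G.tgt

/-- The capacity of the capacitated g-edge `(G, cap)` with terminals `u,v`: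
all values `f e₀` of modular flows `f` on `G ∪ e₀` (over all orientations) whose
value on each edge `e` of `G` lies in the prescribed set `cap e`. -/
def CPcap (r : ℝ) (G : Multigraph) (cap : G.E → Set (AddCircle r)) (u v : G.V) :
    Set (AddCircle r) :=
  {t | ∃ (σ : Option G.E → ℤˣ) (f : Option G.E → AddCircle r),
        (G.addEdge u v).IsFlowOn σ f ∧ (∀ e : G.E, f (some e) ∈ cap e) ∧ f none = t}

/-- The open `r`-capacity `CP_r(G_{u,v})` of the g-edge `G_{u,v}`. -/
noncomputable def CP (r : ℝ) (G : Multigraph) (u v : G.V) : Set (AddCircle r) :=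
  CPcap r G (fun _ => openArc r 1 (r - 1)) u v

/-- A capacitated graph `(G, cap)` admits a flow respecting all capacities
(for `cap e = (1,4) ⊆ ℝ/5ℤ` everywhere this is a sub-5-MCNZF). -/
def HasCapFlow (r : ℝ) (G : Multigraph) (cap : G.E → Set (AddCircle r)) : Prop :=
  ∃ (σ : G.E → ℤˣ) (f : G.E → AddCircle r), G.IsFlowOn σ f ∧ ∀ e, f e ∈ cap e

/-- Deletion of the edge `e₀`. -/
def Multigraph.deleteEdge (G : Multigraph) (e₀ : G.E) : Multigraph where
  V := G.V
  E := {e : G.E // e ≠ e₀}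
  src := fun e => G.src e.1
  tgt := fun e => G.tgt e.1

/-- Degree of a vertex (loops count twice). -/
def Multigraph.degree (G : Multigraph) (v : G.V) : ℕ :=
  (Finset.univ.filter (fun e => G.src e = v)).card +
  (Finset.univ.filter (fun e => G.tgt e = v)).card

/-- The tail of edge `e` in the orientation `σ`. -/
def Multigraph.osrc (G : Multigraph) (σ : G.E → ℤˣ) (e : G.E) : G.V :=
  if σ e = 1 then G.src e else G.tgt e

/-- The head of edge `e` in the orientation `σ`. -/
def Multigraph.otgt (G : Multigraph) (σ : G.E → ℤˣ) (e : G.E) : G.V :=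
  if σ e = 1 then G.tgt e else G.src e

namespace Multigraph

variable {G : Multigraph}

section Boundary

variable {M N : Type*} [AddCommGroup M] [AddCommGroup N]

variable (G) in
def boundary (f : G.E → M) (v : G.V) : M :=
  ∑ e ∈ univ.filter (fun e => G.src e = v), f e - ∑ e ∈ univ.filter (fun e => G.tgt e = v), f e

theorem isFlow_iff_boundary_eq_zero {f : G.E → M} : G.IsFlow f ↔ ∀ v, G.boundary f v = 0 := by
  simp only [IsFlow, boundary, sub_eq_zero]

theorem boundary_map (φ : M →+ N) (f : G.E → M) (v : G.V) :
    G.boundary (fun e => φ (f e)) v = φ (G.boundary f v) := by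
  simp only [boundary, map_sub, map_sum]

theorem boundary_sub (f g : G.E → M) (v : G.V) :
    G.boundary (fun e => f e - g e) v = G.boundary f v - G.boundary g v := by
  simp only [boundary, sum_sub_distrib]
  abel

theorem boundary_mul_left {R : Type*} [Ring R] (c : R) (f : G.E → R) (v : G.V) :
    G.boundary (fun e => c * f e) v = c * G.boundary f v :=
  boundary_map (AddMonoidHom.mulLeft c) f v

theorem boundary_coe {r : ℝ} (t : G.E → ℝ) (v : G.V) :
    G.boundary (fun e => (t e : AddCircle r)) v = ((G.boundary t v : ℝ) : AddCircle r) :=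
  boundary_map (QuotientAddGroup.mk' _) t v

theorem IsFlowOn.map {σ : G.E → ℤˣ} {f : G.E → M} (h : G.IsFlowOn σ f) (φ : M →+ N) :
    G.IsFlowOn σ fun e => φ (f e) := fun v => by
  simpa only [map_sum, map_zsmul] using congrArg φ (h v)

end Boundary

variable (G) in
def load (x : G.E → ℝ) (v : G.V) : ℝ :=
  ∑ e, ((if G.src e = v then x e else 0) + (if G.tgt e = v then 1 - x e else 0))

theorem load_eq_boundary_add (x : G.E → ℝ) (v : G.V) :
    G.load x v = G.boundary x v + #(univ.filter fun e => G.tgt e = v) := by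
  simp only [load, boundary, sum_add_distrib, sum_filter, card_filter]
  push_cast
  simp only [← sum_sub_distrib, ← sum_add_distrib]
  refine sum_congr rfl fun e _ => ?_
  split_ifs <;> ring

theorem load_nonneg {x : G.E → ℝ} (hx : ∀ e, x e ∈ Set.Icc 0 1) (v : G.V) : 0 ≤ G.load x v :=
  sum_nonneg fun e _ => by
    have := hx e
    split_ifs <;> simp only [Set.mem_Icc] at this <;> linarith

theorem sum_load (x : G.E → ℝ) : ∑ v, G.load x v = Fintype.card G.E := by
  simp only [load]
  rw [sum_comm]
  simp [sum_add_distrib]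

theorem card_le_sum_load {x : G.E → ℝ} (hx : ∀ e, x e ∈ Set.Icc 0 1) {F : Finset G.E}
    {T : Finset G.V} (hFT : ∀ e ∈ F, G.src e ∈ T ∧ G.tgt e ∈ T) :
    (#F : ℝ) ≤ ∑ v ∈ T, G.load x v := by
  have hcomm : ∑ v ∈ T, G.load x v =
      ∑ e, ((if G.src e ∈ T then x e else 0) + (if G.tgt e ∈ T then 1 - x e else 0)) := by
    simp only [load]
    rw [sum_comm]
    simp [sum_add_distrib]
  rw [hcomm, card_eq_sum_ones, Nat.cast_sum, Nat.cast_one]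
  refine le_trans (le_of_eq (sum_congr rfl fun e he => ?_))
    (sum_le_sum_of_subset_of_nonneg (subset_univ F) fun e _ _ => ?_)
  · simp [hFT e he]
  · have := hx e
    split_ifs <;> simp only [Set.mem_Icc] at this <;> linarith

theorem load_eq_card_of_endpoint_choice {a : G.E → G.V} (ha : ∀ e, a e = G.src e ∨ a e = G.tgt e)
    (v : G.V) :
    G.load (fun e => if a e = G.src e then 1 else 0) v = #(univ.filter fun e => a e = v) := by
  rw [card_eq_sum_ones, sum_filter, Nat.cast_sum]
  refine sum_congr rfl fun e _ => ?_
  rcases ha e with h | h <;> split_ifs <;> grind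

variable (G) in
theorem exists_endpoint_choice_card_le (c : G.V → ℕ)
    (hc : ∀ F : Finset G.E, #F ≤ ∑ v ∈ F.biUnion (fun e => {G.src e, G.tgt e}), c v) :
    ∃ a : G.E → G.V, (∀ e, a e = G.src e ∨ a e = G.tgt e) ∧
      ∀ v, #(univ.filter fun e => a e = v) ≤ c v := by
  let slots : G.E → Finset (Σ _ : G.V, ℕ) := fun e =>
    ({G.src e, G.tgt e} : Finset G.V).sigma fun v => range (c v)
  obtain ⟨f, hf_inj, hf_mem⟩ := (all_card_le_biUnion_card_iff_exists_injective slots).1 fun F => by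
    have : F.biUnion slots =
        (F.biUnion fun e => {G.src e, G.tgt e}).sigma fun v => range (c v) := by
      ext ⟨v, k⟩
      simp [slots, ← and_assoc, exists_and_right]
    rw [this, card_sigma]
    simpa using hc F
  refine ⟨fun e => (f e).1, fun e => by simpa [slots] using (mem_sigma.1 (hf_mem e)).1, fun v => ?_⟩
  have hmaps : Set.MapsTo (fun e => (f e).2) (univ.filter fun e => (f e).1 = v) (range (c v)) :=
    fun e he => by
      have := mem_sigma.1 (hf_mem e)
      simp_all
  have hinj : Set.InjOn (fun e => (f e).2) (univ.filter fun e => (f e).1 = v) :=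
    fun e₁ h₁ e₂ h₂ h => hf_inj (Sigma.ext (by simp_all) (heq_of_eq h))
  simpa using card_le_card_of_injOn _ hmaps hinj

theorem exists_zero_one_load_eq {x : G.E → ℝ} (hx : ∀ e, x e ∈ Set.Icc 0 1)
    (hint : ∀ v, ∃ n : ℕ, G.load x v = n) :
    ∃ x' : G.E → ℝ, (∀ e, x' e = 0 ∨ x' e = 1) ∧ G.load x' = G.load x := by
  choose c hc using hint
  obtain ⟨a, ha, ha_card⟩ := G.exists_endpoint_choice_card_le c fun F => by
    have := card_le_sum_load hx (T := F.biUnion fun e => {G.src e, G.tgt e})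
      fun e he => ⟨mem_biUnion.2 ⟨e, he, by simp⟩, mem_biUnion.2 ⟨e, he, by simp⟩⟩
    simp only [hc] at this
    exact_mod_cast this
  have hload := load_eq_card_of_endpoint_choice ha
  have hsum : ∑ v, #(univ.filter fun e => a e = v) = ∑ v, c v := by
    have h := (sum_load (fun e => if a e = G.src e then 1 else 0)).trans (sum_load x).symm
    simp only [hload, hc] at h
    exact_mod_cast h
  have hcard := (sum_eq_sum_iff_of_le fun v _ => ha_card v).1 hsum
  refine ⟨fun e => if a e = G.src e then 1 else 0, fun e => by dsimp only; split_ifs <;> simp,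
    funext fun v => ?_⟩
  rw [hload, hc, hcard v (mem_univ v)]

theorem exists_zero_one_boundary_eq {y : G.E → ℝ} (hy : ∀ e, y e ∈ Set.Icc 0 1)
    (hint : ∀ v, ∃ n : ℤ, G.boundary y v = n) :
    ∃ x : G.E → ℝ, (∀ e, x e = 0 ∨ x e = 1) ∧ ∀ v, G.boundary x v = G.boundary y v := by
  have hint' : ∀ v, ∃ m : ℕ, G.load y v = m := fun v => by
    obtain ⟨n, hn⟩ := hint v
    have hload : G.load y v = ((n + #(univ.filter fun e => G.tgt e = v) : ℤ) : ℝ) := by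
      rw [load_eq_boundary_add, hn]
      push_cast
      ring
    have hnonneg : 0 ≤ n + #(univ.filter fun e => G.tgt e = v) := by
      exact_mod_cast hload ▸ load_nonneg hy v
    obtain ⟨m, hm⟩ := Int.eq_ofNat_of_zero_le hnonneg
    exact ⟨m, by rw [hload, hm, Int.cast_natCast]⟩
  obtain ⟨x, hx, hxy⟩ := exists_zero_one_load_eq hy hint'
  refine ⟨x, hx, fun v => ?_⟩
  have := congrFun hxy v
  rw [load_eq_boundary_add, load_eq_boundary_add] at this
  linarith

theorem exists_isFlow_sub_mul_of_isFlow_coe {r : ℝ} (hr : 0 < r) {t : G.E → ℝ}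
    (ht : ∀ e, t e ∈ Set.Icc 0 r)
    (hflow : G.IsFlow fun e => (t e : AddCircle r)) :
    ∃ x : G.E → ℝ, (∀ e, x e = 0 ∨ x e = 1) ∧ G.IsFlow fun e => t e - r * x e := by
  have hint : ∀ v, ∃ n : ℤ, G.boundary (fun e => r⁻¹ * t e) v = n := fun v => by
    have h := isFlow_iff_boundary_eq_zero.1 hflow v
    rw [boundary_coe, AddCircle.coe_eq_zero_iff] at h
    obtain ⟨n, hn⟩ := h
    refine ⟨n, ?_⟩
    rw [boundary_mul_left, ← hn, zsmul_eq_mul]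
    field_simp
  have hy : ∀ e, r⁻¹ * t e ∈ Set.Icc 0 1 := fun e =>
    ⟨mul_nonneg (inv_nonneg.2 hr.le) (ht e).1, (inv_mul_le_one₀ hr).2 (ht e).2⟩
  obtain ⟨x, hx, hxt⟩ := exists_zero_one_boundary_eq hy hint
  refine ⟨x, hx, isFlow_iff_boundary_eq_zero.2 fun v => ?_⟩
  rw [boundary_sub, boundary_mul_left, hxt, boundary_mul_left, mul_inv_cancel_left₀ hr.ne',
    sub_self]

end Multigraph

theorem closedArc_one_sub_one_eq_image {r : ℝ} (hr : 2 ≤ r) :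
    closedArc r 1 (r - 1) = (fun t : ℝ => (t : AddCircle r)) '' Set.Icc 1 (r - 1) := by
  have hr0 : 0 < r := by linarith
  have hlo : 0 ≤ (r - 1 - 1) / r := div_nonneg (by linarith) hr0.le
  have hhi : (r - 1 - 1) / r < 1 := (div_lt_one hr0).2 (by linarith)
  rw [closedArc, Int.fract_eq_self.2 ⟨hlo, hhi⟩, div_mul_cancel₀ _ hr0.ne']
  ring_nf

theorem units_zsmul_mem_closedArc_one_sub_one {r : ℝ} (hr : 2 ≤ r) (u : ℤˣ) {a : AddCircle r}
    (ha : a ∈ closedArc r 1 (r - 1)) : (u : ℤ) • a ∈ closedArc r 1 (r - 1) := by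
  rw [closedArc_one_sub_one_eq_image hr] at ha ⊢
  obtain ⟨t, ⟨ht1, ht2⟩, rfl⟩ := ha
  rcases Int.units_eq_one_or u with rfl | rfl
  · exact ⟨t, ⟨ht1, ht2⟩, by simp⟩
  · refine ⟨r - t, ⟨by linarith, by linarith⟩, ?_⟩
    simp [AddCircle.coe_period]

theorem Multigraph.exists_cnzf_lift (G : Multigraph) {r : ℝ} (hr : 2 ≤ r) (σ₀ : G.E → ℤˣ)
    (f : G.E → AddCircle r) (hf : G.IsFlowOn σ₀ f) (hmem : ∀ e, f e ∈ closedArc r 1 (r - 1)) :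
    ∃ (σ : G.E → ℤˣ) (g : G.E → ℝ), G.IsFlowOn σ g ∧ (∀ e, g e ∈ Set.Icc (1 : ℝ) (r - 1)) ∧
      ∀ e, ((g e : ℝ) : AddCircle r) = ((σ₀ e * σ e : ℤˣ) : ℤ) • f e := by
  have hrep : ∀ e, ∃ t ∈ Set.Icc 1 (r - 1), (t : AddCircle r) = (σ₀ e : ℤ) • f e := fun e => by
    simpa [closedArc_one_sub_one_eq_image hr] using
      units_zsmul_mem_closedArc_one_sub_one hr (σ₀ e) (hmem e)
  choose t ht htf using hrep
  obtain ⟨x, hx, hflow⟩ := G.exists_isFlow_sub_mul_of_isFlow_coe (t := t) (by linarith)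
    (fun e => ⟨by linarith [(ht e).1], by linarith [(ht e).2]⟩) (by simp only [htf]; exact hf)
  let σ : G.E → ℤˣ := fun e => if x e = 0 then 1 else -1
  have hσσ : ∀ e, (σ e : ℤ) * σ e = 1 := fun e => by
    rw [← Units.val_mul, Int.units_mul_self, Units.val_one]
  refine ⟨σ, fun e => (σ e : ℤ) • (t e - r * x e), ?_, fun e => ?_, fun e => ?_⟩
  · simpa only [IsFlowOn, smul_smul, hσσ, one_smul] using hflow
  · obtain ⟨h1, h2⟩ := ht e
    rcases hx e with h | h
    · simpa [σ, h] using And.intro h1 h2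
    · have hg : (σ e : ℤ) • (t e - r * x e) = r - t e := by simp [σ, h]
      dsimp only
      rw [hg]
      constructor <;> linarith
  · rcases hx e with h | h <;> simp [σ, h, htf, AddCircle.coe_period]

/-- For a real `r ≥ 2` and a graph `G`: `G` admits a circular
nowhere-zero `r`-flow iff it admits an `r`-MCNZF; moreover, every `r`-MCNZF `f`
(on a reference orientation `σ₀`) lifts, on some orientation `σ`, to a
real-valued circular nowhere-zero `r`-flow `g` with `g e ≡ f_σ e (mod r)` for
every edge `e`, where `f_σ e = f e` if `e` has the same direction in `σ₀` and
`σ`, and `f_σ e = -f e` otherwise. -/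
theorem cnzf_iff_mcnzf (r : ℝ) (hr : 2 ≤ r) (G : Multigraph) :
    (G.HasCNZF r ↔
      ∃ (σ : G.E → ℤˣ) (f : G.E → AddCircle r),
        G.IsFlowOn σ f ∧ ∀ e, f e ∈ closedArc r 1 (r - 1)) ∧
    (∀ (σ₀ : G.E → ℤˣ) (f : G.E → AddCircle r),
      G.IsFlowOn σ₀ f → (∀ e, f e ∈ closedArc r 1 (r - 1)) →
      ∃ (σ : G.E → ℤˣ) (g : G.E → ℝ),
        G.IsFlowOn σ g ∧ (∀ e, g e ∈ Set.Icc (1 : ℝ) (r - 1)) ∧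
        ∀ e, ((g e : ℝ) : AddCircle r) = ((σ₀ e * σ e : ℤˣ) : ℤ) • f e) := by
  refine ⟨⟨fun ⟨σ, g, hg, hgmem⟩ => ?_, fun ⟨σ₀, f, hf, hmem⟩ => ?_⟩, G.exists_cnzf_lift hr⟩
  · refine ⟨σ, fun e => (g e : AddCircle r), hg.map (QuotientAddGroup.mk' _), fun e => ?_⟩
    rw [closedArc_one_sub_one_eq_image hr]
    exact ⟨g e, hgmem e, rfl⟩
  · obtain ⟨σ, g, hg, hgmem, -⟩ := G.exists_cnzf_lift hr σ₀ f hf hmem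
    exact ⟨σ, g, hg, hgmem⟩
end

section
/- Let k ≥ 2 be an integer and let q = G_{u,v} and t = H_{u,v} be two g-edges sharing the pair of terminals u and v and otherwise vertex-disjoint, with open k-capacities CP_k(q) = A and CP_k(t) = B. Then their union (the parallel join of q and t) is a g-edge with terminals u and v whose open k-capacity equals A + B = { a + b : a ∈ A, b ∈ B }. -/
open Finset


open Finset

/-- Vertex embedding for the parallel join: `H`'s terminals `u', v'` are glued
onto `G`'s terminals `u, v`; other vertices of `H` are kept. -/
def pjEmbed (G H : Multigraph) (u v : G.V) (u' v' : H.V) (x : H.V) :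
    G.V ⊕ {x : H.V // x ≠ u' ∧ x ≠ v'} :=
  if h1 : x = u' then Sum.inl u
  else if h2 : x = v' then Sum.inl v
  else Sum.inr ⟨x, h1, h2⟩

/-- Parallel join of the g-edges `G_{u,v}` and `H_{u',v'}`: their disjoint union
with `u'` identified with `u` and `v'` identified with `v`. -/
def parallelJoin (G H : Multigraph) (u v : G.V) (u' v' : H.V) : Multigraph where
  V := G.V ⊕ {x : H.V // x ≠ u' ∧ x ≠ v'}
  E := G.E ⊕ H.E
  src := Sum.elim (fun e => Sum.inl (G.src e)) (fun e => pjEmbed G H u v u' v' (H.src e))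
  tgt := Sum.elim (fun e => Sum.inl (G.tgt e)) (fun e => pjEmbed G H u v u' v' (H.tgt e))

/-- Vertex embedding for the serial join: `H`'s terminal `v'` is glued onto
`G`'s vertex `v`; other vertices of `H` are kept. -/
def sjEmbed (G H : Multigraph) (v : G.V) (v' : H.V) (x : H.V) :
    G.V ⊕ {x : H.V // x ≠ v'} :=
  if h : x = v' then Sum.inl v else Sum.inr ⟨x, h⟩

/-- Serial join of the g-edges `G_{u,v}` and `H_{v',w}`: their disjoint union
with `v'` identified with `v`. -/
def serialJoin (G H : Multigraph) (v : G.V) (v' : H.V) : Multigraph where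
  V := G.V ⊕ {x : H.V // x ≠ v'}
  E := G.E ⊕ H.E
  src := Sum.elim (fun e => Sum.inl (G.src e)) (fun e => sjEmbed G H v v' (H.src e))
  tgt := Sum.elim (fun e => Sum.inl (G.tgt e)) (fun e => sjEmbed G H v v' (H.tgt e))

/-! Restricting a flow on the parallel join plus `e₀` to the edges of `H`, conservation at the
inner vertices of `H` and the vanishing of the total net outflow force the restriction to be a
flow from `u'` to `v'` of some value `b`; what remains at the glued terminals makes the
restriction to `G` a flow of value `t - b` between `u` and `v`. Conversely two such flows of
values `a` and `b` glue to a flow of value `a + b`. Orientations only contribute signs, which can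
be absorbed into the flow values edge by edge. -/

section Fibers

variable {V W M : Type*} [Fintype V] [DecidableEq V] [DecidableEq W]

theorem Finset.sum_filter_comp_eq_sum_fiberwise {E : Type*} [Fintype E] [AddCommMonoid M]
    (s : E → V) (φ : V → W) (g : E → M) (w : W) :
    ∑ e with φ (s e) = w, g e = ∑ y with φ y = w, ∑ e with s e = y, g e := by
  rw [Finset.sum_fiberwise_eq_sum_filter]
  simp only [Finset.mem_filter, Finset.mem_univ, true_and]

variable [AddCommGroup M]

theorem Finset.sum_filter_single_sub_single (φ : V → W) (a b : V) (c : M) (w : W) :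
    ∑ y with φ y = w, (Pi.single b c - Pi.single a c : V → M) y
      = (Pi.single (φ b) c - Pi.single (φ a) c : W → M) w := by
  simp [Finset.sum_sub_distrib, Pi.single_apply, eq_comm]

theorem eq_single_sub_single_of_sum_eq_zero {F : V → M} {a b : V} (hab : a ≠ b)
    (hF : ∀ w, w ≠ a → w ≠ b → F w = 0) (hsum : ∑ w, F w = 0) :
    F = Pi.single b (F b) - Pi.single a (F b) := by
  have hFa : F a = -F b := by
    rw [Fintype.sum_eq_add a b hab fun w hw => hF w hw.1 hw.2] at hsum
    exact eq_neg_of_add_eq_zero_left hsum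
  ext w
  by_cases hwa : w = a
  · subst hwa; simp [hFa, hab]
  by_cases hwb : w = b
  · subst hwb; simp [hab.symm]
  · simp [hwa, hwb, hF w hwa hwb]

end Fibers

namespace Multigraph

variable {G : Multigraph} {M : Type*} [AddCommGroup M]

variable (G) in
def netOut (g : G.E → M) (w : G.V) : M :=
  ∑ e with G.src e = w, g e - ∑ e with G.tgt e = w, g e

theorem isFlow_iff_netOut_eq_zero {g : G.E → M} : G.IsFlow g ↔ G.netOut g = 0 := by
  simp only [IsFlow, funext_iff, netOut, Pi.zero_apply, sub_eq_zero]

theorem sum_netOut (g : G.E → M) : ∑ w, G.netOut g w = 0 := by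
  simp only [netOut, Finset.sum_sub_distrib, Finset.sum_fiberwise, sub_self]

theorem IsFlow.zsmul {g : G.E → M} (hg : G.IsFlow g) (c : ℤ) : G.IsFlow (fun e => c • g e) :=
  fun w => by rw [← Finset.smul_sum, ← Finset.smul_sum, hg w]

theorem netOut_addEdge (u v : G.V) (g : Option G.E → M) (w : G.V) :
    (G.addEdge u v).netOut g w
      = G.netOut (fun e => g (some e)) w + (Pi.single u (g none) : G.V → M) w
        - (Pi.single v (g none) : G.V → M) w := by
  change ∑ e : Option G.E with e.elim u G.src = w, g e
    - ∑ e : Option G.E with e.elim v G.tgt = w, g e = _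
  simp only [netOut, Finset.sum_filter, Fintype.sum_option, Option.elim, Pi.single_apply, eq_comm]
  abel

theorem isFlow_addEdge_iff {u v : G.V} {g : Option G.E → M} :
    (G.addEdge u v).IsFlow g ↔
      G.netOut (fun e => g (some e)) = Pi.single v (g none) - Pi.single u (g none) := by
  refine (isFlow_iff_netOut_eq_zero (G := G.addEdge u v)).trans ?_
  rw [funext_iff, funext_iff]
  refine forall_congr' fun (w : G.V) => ?_
  rw [netOut_addEdge u v g w]
  change _ = (0 : M) ↔ _
  rw [Pi.sub_apply, ← sub_eq_zero (a := G.netOut _ w), sub_sub_eq_add_sub]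

end Multigraph

theorem units_zsmul_zsmul_self {M : Type*} [AddCommGroup M] (s : ℤˣ) (x : M) :
    (s : ℤ) • (s : ℤ) • x = x := by
  rw [smul_smul, ← Units.val_mul, Int.units_mul_self, Units.val_one, one_smul]

theorem mem_CPcap_iff {r : ℝ} {G : Multigraph} {cap : G.E → Set (AddCircle r)} {u v : G.V}
    {t : AddCircle r} :
    t ∈ CPcap r G cap u v ↔ ∃ g : G.E → AddCircle r,
      G.netOut g = Pi.single v t - Pi.single u t ∧
        ∀ e, ∃ s : ℤˣ, (s : ℤ) • g e ∈ cap e := by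
  constructor
  · rintro ⟨σ, f, hflow, hcap, rfl⟩
    have hg := Multigraph.isFlow_addEdge_iff.mp (hflow.zsmul (σ none))
    simp only [units_zsmul_zsmul_self] at hg
    refine ⟨_, hg, fun e => ⟨σ none * σ (some e), ?_⟩⟩
    rw [Units.val_mul, mul_comm, mul_smul, units_zsmul_zsmul_self, units_zsmul_zsmul_self]
    exact hcap e
  · rintro ⟨g, hg, hcap⟩
    choose s hs using hcap
    have hflow : (G.addEdge u v).IsFlow (fun e : Option G.E => e.elim t g) :=
      Multigraph.isFlow_addEdge_iff.mpr hg
    refine ⟨fun e => e.elim 1 s, fun e => e.elim t fun e => (s e : ℤ) • g e, ?_, hs, rfl⟩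
    refine (congrArg (G.addEdge u v).IsFlow (funext fun e => ?_)).mpr hflow
    cases e <;> simp [units_zsmul_zsmul_self]

section ParallelJoin

variable {G H : Multigraph} {u v : G.V} {u' v' : H.V}

theorem pjEmbed_left : pjEmbed G H u v u' v' u' = Sum.inl u := dif_pos rfl

theorem pjEmbed_right (huv' : u' ≠ v') : pjEmbed G H u v u' v' v' = Sum.inl v := by
  rw [pjEmbed, dif_neg huv'.symm, dif_pos rfl]

theorem pjEmbed_eq_inr_iff {y : H.V} {z : {x : H.V // x ≠ u' ∧ x ≠ v'}} :
    pjEmbed G H u v u' v' y = Sum.inr z ↔ y = z.1 := by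
  unfold pjEmbed
  split_ifs with h1 h2
  · exact iff_of_false (by simp) fun h => z.2.1 (h ▸ h1)
  · exact iff_of_false (by simp) fun h => z.2.2 (h ▸ h2)
  · simp [Subtype.ext_iff]

variable {M : Type*} [AddCommGroup M]

theorem netOut_parallelJoin (gG : G.E → M) (gH : H.E → M)
    (w : G.V ⊕ {x : H.V // x ≠ u' ∧ x ≠ v'}) :
    (parallelJoin G H u v u' v').netOut (Sum.elim gG gH) w
      = ∑ x with Sum.inl x = w, G.netOut gG x
        + ∑ y with pjEmbed G H u v u' v' y = w, H.netOut gH y := by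
  change ∑ e : G.E ⊕ H.E with Sum.elim (fun e => Sum.inl (G.src e))
      (fun e => pjEmbed G H u v u' v' (H.src e)) e = w, Sum.elim gG gH e
    - ∑ e : G.E ⊕ H.E with Sum.elim (fun e => Sum.inl (G.tgt e))
      (fun e => pjEmbed G H u v u' v' (H.tgt e)) e = w, Sum.elim gG gH e = _
  rw [Finset.sum_filter, Finset.sum_filter, Fintype.sum_sum_type, Fintype.sum_sum_type,
    ← Finset.sum_filter, ← Finset.sum_filter, ← Finset.sum_filter, ← Finset.sum_filter]
  simp only [Multigraph.netOut, Finset.sum_sub_distrib, ← sum_filter_comp_eq_sum_fiberwise]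
  rw [← add_sub_add_comm]
  -- the two sides differ only in the `Decidable` instances of their filters
  rfl

theorem sum_filter_pjEmbed_single_sub_single (huv' : u' ≠ v') (b : M)
    (w : G.V ⊕ {x : H.V // x ≠ u' ∧ x ≠ v'}) :
    ∑ y with pjEmbed G H u v u' v' y = w, (Pi.single v' b - Pi.single u' b : H.V → M) y
      = (Pi.single (Sum.inl v) b - Pi.single (Sum.inl u) b : _ → M) w := by
  rw [sum_filter_single_sub_single, pjEmbed_left, pjEmbed_right huv']

theorem netOut_parallelJoin_eq_single_sub_single_iff (huv' : u' ≠ v') {gG : G.E → M}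
    {gH : H.E → M} {t : M} :
    (parallelJoin G H u v u' v').netOut (Sum.elim gG gH)
        = (Pi.single (Sum.inl v) t - Pi.single (Sum.inl u) t :
            G.V ⊕ {x // x ≠ u' ∧ x ≠ v'} → M) ↔
      ∃ a b, G.netOut gG = Pi.single v a - Pi.single u a ∧
        H.netOut gH = Pi.single v' b - Pi.single u' b ∧ a + b = t := by
  constructor
  · intro h
    have hH_inner : ∀ z, z ≠ u' → z ≠ v' → H.netOut gH z = 0 := fun z hz₁ hz₂ => by
      have hz := congrFun h (Sum.inr ⟨z, hz₁, hz₂⟩)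
      rw [netOut_parallelJoin gG gH] at hz
      simpa [pjEmbed_eq_inr_iff, Pi.single_apply, Finset.filter_eq'] using hz
    have hH := eq_single_sub_single_of_sum_eq_zero huv' hH_inner (Multigraph.sum_netOut gH)
    refine ⟨t - H.netOut gH v', _, ?_, hH, sub_add_cancel _ _⟩
    ext x
    have hx := congrFun h (Sum.inl x)
    rw [netOut_parallelJoin gG gH, hH, sum_filter_pjEmbed_single_sub_single huv'] at hx
    simp only [Pi.sub_apply, Pi.single_apply, Sum.inl.injEq, Finset.filter_eq',
      Finset.mem_univ, if_true, Finset.sum_singleton] at hx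
    rw [Pi.sub_apply, Pi.single_apply, Pi.single_apply, eq_sub_of_add_eq hx]
    split_ifs <;> abel
  · rintro ⟨a, b, hG, hH, rfl⟩
    ext (w : G.V ⊕ {x : H.V // x ≠ u' ∧ x ≠ v'})
    rw [netOut_parallelJoin gG gH, hG, hH, sum_filter_single_sub_single,
      sum_filter_pjEmbed_single_sub_single huv']
    simp only [Pi.single_add, Pi.sub_apply, Pi.add_apply]
    abel

open Pointwise in
theorem CPcap_parallelJoin {r : ℝ} (huv' : u' ≠ v') (capG : G.E → Set (AddCircle r))
    (capH : H.E → Set (AddCircle r)) :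
    CPcap r (parallelJoin G H u v u' v') (Sum.elim capG capH) (Sum.inl u) (Sum.inl v)
      = CPcap r G capG u v + CPcap r H capH u' v' := by
  ext t
  refine mem_CPcap_iff.trans ?_
  simp only [Set.mem_add, mem_CPcap_iff]
  constructor
  · rintro ⟨g, hg, hcap⟩
    rw [← Sum.elim_comp_inl_inr g] at hg
    obtain ⟨a, b, hG, hH, rfl⟩ := (netOut_parallelJoin_eq_single_sub_single_iff huv').mp hg
    exact ⟨a, ⟨_, hG, fun e => hcap (Sum.inl e)⟩, b, ⟨_, hH, fun e => hcap (Sum.inr e)⟩,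
      rfl⟩
  · rintro ⟨a, ⟨gG, hG, hcapG⟩, b, ⟨gH, hH, hcapH⟩, rfl⟩
    exact ⟨Sum.elim gG gH, (netOut_parallelJoin_eq_single_sub_single_iff huv').mpr
      ⟨a, b, hG, hH, rfl⟩, Sum.forall.mpr ⟨hcapG, hcapH⟩⟩

end ParallelJoin

open Pointwise in
theorem parallelJoin_capacity_general (k : ℕ) (G H : Multigraph)
    (u v : G.V) (u' v' : H.V) (huv' : u' ≠ v') :
    CP (k : ℝ) (parallelJoin G H u v u' v') (Sum.inl u) (Sum.inl v)
      = CP (k : ℝ) G u v + CP (k : ℝ) H u' v' := by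
  unfold CP
  rw [← CPcap_parallelJoin huv']
  congr 1
  exact (Sum.elim_const_const _).symm

open Pointwise in
/-- The open `k`-capacity of the parallel join of two g-edges
sharing their pair of terminals (and otherwise disjoint) is the pointwise sum
of their open `k`-capacities. -/
theorem parallelJoin_capacity (k : ℕ) (hk : 2 ≤ k) (G H : Multigraph)
    (u v : G.V) (u' v' : H.V) (huv : u ≠ v) (huv' : u' ≠ v') :
    CP (k : ℝ) (parallelJoin G H u v u' v') (Sum.inl u) (Sum.inl v)
      = CP (k : ℝ) G u v + CP (k : ℝ) H u' v' :=
  parallelJoin_capacity_general k G H u v u' v' huv'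
end

section
/- Let G be a capacitated graph and P = v₀v₁⋯v_m (m ≥ 2) a path in G all of whose edges carry the same capacity A, where A is a symmetric union of exactly two open integer unit intervals of ℝ/5ℤ (i.e., Me(A) = 2), and such that every internal vertex v_i (0 < i < m) has degree 3 in G and the third edge incident with v_i (the one not on P) has capacity B_{v_i} ⊆ (1,4). Fix an orientation of G in which P is a directed path. If f is a sub-5-MCNZF of G, then the values f(v₀v₁), f(v₁v₂), …, f(v_{m−1}v_m) alternate between the two open unit intervals contained in A. -/
open Finset


open Finset

private def img (s : Set ℝ) : Set (AddCircle (5:ℝ)) := (fun t : ℝ => (t : AddCircle (5:ℝ))) '' s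

private lemma coe_eq_coe' (s t : ℝ) :
    (s : AddCircle (5:ℝ)) = (t : AddCircle (5:ℝ)) ↔ ∃ k : ℤ, s - t = 5 * k := by
  rw [show (s : AddCircle (5:ℝ)) = (t : AddCircle (5:ℝ)) ↔ ((s - t : ℝ) : AddCircle (5:ℝ)) = 0 by
    rw [AddCircle.coe_sub, sub_eq_zero]]
  rw [AddCircle.coe_eq_zero_iff]
  constructor
  · rintro ⟨k, hk⟩; exact ⟨k, by rw [← hk, zsmul_eq_mul]; ring⟩
  · rintro ⟨k, hk⟩; exact ⟨k, by rw [hk, zsmul_eq_mul]; ring⟩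

private lemma fract_neg_div (c : ℝ) (h0 : 0 < c) (h1 : c < 5) : Int.fract (-c/5) = 1 - c/5 := by
  have hfl : ⌊-c/5⌋ = -1 := by
    rw [Int.floor_eq_iff]
    constructor <;> push_cast <;> nlinarith
  rw [Int.fract, hfl]; push_cast; ring

private lemma openArc_eq (a b : ℝ) (h0 : a < b) (h1 : b < a + 5) :
    openArc 5 a b = img (Set.Ioo a b) := by
  unfold openArc img
  rw [show (a - b)/5 = -(b-a)/5 by ring, fract_neg_div (b-a) (by linarith) (by linarith),
    show a + (5 - (1 - (b-a)/5) * 5) = b by ring]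

private lemma img_shift (a b : ℝ) (k : ℤ) :
    img (Set.Ioo a b) = img (Set.Ioo (a - 5*k) (b - 5*k)) := by
  unfold img
  ext x
  simp only [Set.mem_image, Set.mem_Ioo]
  constructor
  · rintro ⟨t, ⟨h1, h2⟩, rfl⟩
    exact ⟨t - 5*k, ⟨by linarith, by linarith⟩, ((coe_eq_coe' _ _).mpr ⟨-k, by push_cast; ring⟩)⟩
  · rintro ⟨t, ⟨h1, h2⟩, rfl⟩
    exact ⟨t + 5*k, ⟨by linarith, by linarith⟩, ((coe_eq_coe' _ _).mpr ⟨k, by push_cast; ring⟩)⟩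

private lemma R_symm (x : AddCircle (5:ℝ)) (hx : x ∈ img (Set.Ioo (1:ℝ) 4)) :
    -x ∈ img (Set.Ioo (1:ℝ) 4) := by
  obtain ⟨t, ⟨h1, h2⟩, rfl⟩ := hx
  exact ⟨5 - t, ⟨by linarith, by linarith⟩, by
    rw [← AddCircle.coe_neg]
    exact (coe_eq_coe' _ _).mpr ⟨1, by ring⟩⟩

private lemma diff_not_mem_R (a b : ℝ) (hb : b ≤ a + 1) (x y : AddCircle (5:ℝ))
    (hx : x ∈ img (Set.Ioo a b)) (hy : y ∈ img (Set.Ioo a b)) :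
    y - x ∉ img (Set.Ioo (1:ℝ) 4) := by
  obtain ⟨s, ⟨hs1, hs2⟩, rfl⟩ := hx
  obtain ⟨u, ⟨hu1, hu2⟩, rfl⟩ := hy
  rintro ⟨t, ⟨ht1, ht2⟩, ht⟩
  rw [← AddCircle.coe_sub] at ht
  obtain ⟨k, hk⟩ := (coe_eq_coe' _ _).mp ht
  have hk1 : (0:ℝ) < 5*k := by linarith
  have hk2 : (5:ℝ)*k < 5 := by linarith
  have : (0:ℤ) < k := by exact_mod_cast (by linarith : (0:ℝ) < k)
  have : (k:ℤ) < 1 := by exact_mod_cast (by linarith : (k:ℝ) < 1)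
  omega

private lemma disjoint_PQ (n : ℤ)
    (htwo : openArc 5 (n : ℝ) ((n : ℝ) + 1) ≠ openArc 5 (-(n : ℝ) - 1) (-(n : ℝ)))
    (x : AddCircle (5:ℝ)) (hP : x ∈ img (Set.Ioo (n:ℝ) ((n:ℝ)+1)))
    (hQ : x ∈ img (Set.Ioo (-(n:ℝ)-1) (-(n:ℝ)))) : False := by
  obtain ⟨s, ⟨hs1, hs2⟩, rfl⟩ := hP
  obtain ⟨u, ⟨hu1, hu2⟩, hux⟩ := hQ
  obtain ⟨k, hk⟩ := (coe_eq_coe' _ _).mp hux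
  -- u - s = 5k, u - s ∈ (-2n-2, -2n) so 5k = -2n-1
  have h5k : 5*k = -2*n - 1 := by
    have l1 : (5:ℝ)*k < -2*(n:ℝ) := by linarith
    have l2 : (-2:ℝ)*(n:ℝ) - 2 < 5*k := by linarith
    have i1 : 5*k < -2*n := by exact_mod_cast (by push_cast; linarith : ((5*k : ℤ):ℝ) < ((-2*n : ℤ):ℝ))
    have i2 : -2*n-2 < 5*k := by exact_mod_cast (by push_cast; linarith : (((-2*n-2) : ℤ):ℝ) < ((5*k : ℤ):ℝ))
    omega
  apply htwo
  have hkr : (5:ℝ)*(k:ℝ) = -2*(n:ℝ) - 1 := by exact_mod_cast h5k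
  rw [openArc_eq _ _ (by linarith) (by linarith), openArc_eq _ _ (by linarith) (by linarith),
    img_shift ((n:ℝ)) ((n:ℝ)+1) (-k),
    show (n:ℝ) - 5*((-k : ℤ):ℝ) = -(n:ℝ)-1 by push_cast; linarith,
    show (n:ℝ)+1 - 5*((-k : ℤ):ℝ) = -(n:ℝ) by push_cast; linarith]

private lemma sum_nat_eq_one {α : Type*} [DecidableEq α] (s : Finset α) (g : α → ℕ)
    (h : ∑ a ∈ s, g a = 1) :
    ∃ a ∈ s, g a = 1 ∧ ∀ b ∈ s, b ≠ a → g b = 0 := by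
  have hex : ∃ a ∈ s, g a ≠ 0 := by
    by_contra hc
    push_neg at hc
    rw [Finset.sum_eq_zero (fun a ha => hc a ha)] at h
    omega
  obtain ⟨a, ha, hga⟩ := hex
  have hsplit := Finset.add_sum_erase s g ha
  refine ⟨a, ha, by omega, ?_⟩
  intro b hb hba
  have hb' : b ∈ s.erase a := Finset.mem_erase.mpr ⟨hba, hb⟩
  have := Finset.single_le_sum (f := g) (fun i _ => Nat.zero_le _) hb'
  omega

private def eps (G : Multigraph) (σ : G.E → ℤˣ) (v : G.V) (e : G.E) : ℤ :=
  (σ e : ℤ) * ((if G.src e = v then 1 else 0) - (if G.tgt e = v then 1 else 0))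

private lemma flow_at (G : Multigraph) (σ : G.E → ℤˣ) (f : G.E → AddCircle (5:ℝ))
    (hf : G.IsFlowOn σ f) (v : G.V) :
    ∑ e : G.E, eps G σ v e • f e = 0 := by
  have h := hf v
  rw [Finset.sum_filter, Finset.sum_filter] at h
  have key : ∀ e : G.E, eps G σ v e • f e =
      (if G.src e = v then (σ e : ℤ) • f e else 0) -
        (if G.tgt e = v then (σ e : ℤ) • f e else 0) := by
    intro e
    unfold eps
    split_ifs <;> simp [sub_smul, mul_smul]
  rw [Finset.sum_congr rfl (fun e _ => key e), Finset.sum_sub_distrib, h, sub_self]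

private lemma degree_eq_sum (G : Multigraph) (v : G.V) :
    G.degree v = ∑ e : G.E,
      ((if G.src e = v then 1 else 0) + (if G.tgt e = v then 1 else 0) : ℕ) := by
  unfold Multigraph.degree
  rw [Finset.sum_add_distrib, Finset.card_filter, Finset.card_filter]

private lemma eps_osrc (G : Multigraph) (σ : G.E → ℤˣ) (e : G.E) (v : G.V)
    (h1 : G.osrc σ e = v) (h2 : G.otgt σ e ≠ v) : eps G σ v e = 1 := by
  have hne : ¬((-1 : ℤˣ) = 1) := by decide
  unfold Multigraph.osrc at h1
  unfold Multigraph.otgt at h2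
  unfold eps
  rcases Int.units_eq_one_or (σ e) with h | h <;> rw [h] at h1 h2 ⊢
  · rw [if_pos rfl] at h1 h2
    simp [h1, h2]
  · rw [if_neg hne] at h1 h2
    simp [h1, h2]

private lemma eps_otgt (G : Multigraph) (σ : G.E → ℤˣ) (e : G.E) (v : G.V)
    (h1 : G.osrc σ e ≠ v) (h2 : G.otgt σ e = v) : eps G σ v e = -1 := by
  have hne : ¬((-1 : ℤˣ) = 1) := by decide
  unfold Multigraph.osrc at h1
  unfold Multigraph.otgt at h2
  unfold eps
  rcases Int.units_eq_one_or (σ e) with h | h <;> rw [h] at h1 h2 ⊢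
  · rw [if_pos rfl] at h1 h2
    simp [h1, h2]
  · rw [if_neg hne] at h1 h2
    simp [h1, h2]

private lemma d_eq (G : Multigraph) (σ : G.E → ℤˣ) (e : G.E) (v : G.V) :
    ((if G.src e = v then 1 else 0) + (if G.tgt e = v then 1 else 0) : ℕ)
      = (if G.osrc σ e = v then 1 else 0) + (if G.otgt σ e = v then 1 else 0) := by
  have hne : ¬((-1 : ℤˣ) = 1) := by decide
  unfold Multigraph.osrc Multigraph.otgt
  rcases Int.units_eq_one_or (σ e) with h | h <;> rw [h]
  · rw [if_pos rfl, if_pos rfl]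
  · rw [if_neg hne, if_neg hne]
    exact Nat.add_comm _ _


/-- Along a directed path `p 0, p 1, …, p m` (`m ≥ 2`) all of
whose edges carry the same capacity `A`, a symmetric union of the two distinct
open unit integer intervals `(n, n+1)` and `(-n-1, -n)` of `ℝ/5ℤ` (so
`Me(A) = 2`), and each of whose internal vertices has degree 3 with its third
incident edge of capacity contained in `(1,4)`, the values of any sub-5-MCNZF
alternate between the two unit intervals of `A`. -/
theorem alternating_along_path (G : Multigraph) (cap : G.E → Set (AddCircle (5 : ℝ)))
    (m : ℕ) (hm : 2 ≤ m) (p : ℕ → G.V) (pe : ℕ → G.E)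
    (hinjV : Set.InjOn p (Set.Iic m)) (hinjE : Set.InjOn pe (Set.Iio m))
    (n : ℤ) (A : Set (AddCircle (5 : ℝ)))
    (hA : A = openArc 5 (n : ℝ) ((n : ℝ) + 1) ∪ openArc 5 (-(n : ℝ) - 1) (-(n : ℝ)))
    (htwo : openArc 5 (n : ℝ) ((n : ℝ) + 1) ≠ openArc 5 (-(n : ℝ) - 1) (-(n : ℝ)))
    (σ : G.E → ℤˣ)
    (hdir : ∀ i < m, G.osrc σ (pe i) = p i ∧ G.otgt σ (pe i) = p (i + 1))
    (hcapA : ∀ i < m, cap (pe i) = A)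
    (hdeg : ∀ i, 0 < i → i < m → G.degree (p i) = 3)
    (hthird : ∀ i, 0 < i → i < m → ∀ e : G.E, e ≠ pe (i - 1) → e ≠ pe i →
      (G.src e = p i ∨ G.tgt e = p i) → cap e ⊆ openArc 5 1 4)
    (f : G.E → AddCircle (5 : ℝ)) (hf : G.IsFlowOn σ f) (hfc : ∀ e, f e ∈ cap e) :
    ∀ i, i + 1 < m →
      ((f (pe i) ∈ openArc 5 (n : ℝ) ((n : ℝ) + 1) ↔
          f (pe (i + 1)) ∈ openArc 5 (-(n : ℝ) - 1) (-(n : ℝ))) ∧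
        (f (pe i) ∈ openArc 5 (-(n : ℝ) - 1) (-(n : ℝ)) ↔
          f (pe (i + 1)) ∈ openArc 5 (n : ℝ) ((n : ℝ) + 1))) := by
  intro i hi1
  have him : i < m := by omega
  obtain ⟨hsi, hti⟩ := hdir i him
  obtain ⟨hsi1, hti1⟩ := hdir (i + 1) hi1
  have hne01 : p i ≠ p (i + 1) := by
    intro h
    have := hinjV (Set.mem_Iic.mpr (by omega)) (Set.mem_Iic.mpr (by omega)) h
    omega
  have hne12 : p (i + 1) ≠ p (i + 2) := by
    intro h
    have := hinjV (Set.mem_Iic.mpr (by omega)) (Set.mem_Iic.mpr (by omega)) h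
    omega
  have hEne : pe (i + 1) ≠ pe i := by
    intro h
    have := hinjE (Set.mem_Iio.mpr hi1) (Set.mem_Iio.mpr him) h
    omega
  have heps0 : eps G σ (p (i + 1)) (pe i) = -1 :=
    eps_otgt G σ (pe i) (p (i + 1)) (by rw [hsi]; exact hne01) hti
  have heps1 : eps G σ (p (i + 1)) (pe (i + 1)) = 1 :=
    eps_osrc G σ (pe (i + 1)) (p (i + 1)) hsi1 (by rw [hti1]; exact hne12.symm)
  have hd0 : ((if G.src (pe i) = p (i + 1) then 1 else 0) +
      (if G.tgt (pe i) = p (i + 1) then 1 else 0) : ℕ) = 1 := by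
    rw [d_eq G σ (pe i) (p (i + 1)), hsi, hti]
    simp [hne01]
  have hd1 : ((if G.src (pe (i + 1)) = p (i + 1) then 1 else 0) +
      (if G.tgt (pe (i + 1)) = p (i + 1) then 1 else 0) : ℕ) = 1 := by
    rw [d_eq G σ (pe (i + 1)) (p (i + 1)), hsi1, hti1]
    simp [hne12.symm]
  have hmem2 : pe (i + 1) ∈ Finset.univ.erase (pe i) :=
    Finset.mem_erase.mpr ⟨hEne, Finset.mem_univ _⟩
  have hdsum : ∑ e : G.E, ((if G.src e = p (i + 1) then 1 else 0) +
      (if G.tgt e = p (i + 1) then 1 else 0) : ℕ) = 3 := by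
    rw [← degree_eq_sum]; exact hdeg (i + 1) (by omega) hi1
  rw [← Finset.add_sum_erase _ _ (Finset.mem_univ (pe i)),
    ← Finset.add_sum_erase _ _ hmem2] at hdsum
  beta_reduce at hdsum
  rw [hd0, hd1] at hdsum
  have hsum1 : ∑ e ∈ (Finset.univ.erase (pe i)).erase (pe (i + 1)),
      ((if G.src e = p (i + 1) then 1 else 0) +
        (if G.tgt e = p (i + 1) then 1 else 0) : ℕ) = 1 := by omega
  obtain ⟨e₃, he₃s, hde₃, hdz⟩ := sum_nat_eq_one _ _ hsum1
  have he₃ne1 : e₃ ≠ pe (i + 1) := (Finset.mem_erase.mp he₃s).1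
  have he₃ne0 : e₃ ≠ pe i := (Finset.mem_erase.mp (Finset.mem_erase.mp he₃s).2).1
  have hend : G.src e₃ = p (i + 1) ∨ G.tgt e₃ = p (i + 1) := by
    by_contra hc
    push_neg at hc
    simp [hc.1, hc.2] at hde₃
  have hnotboth : ¬(G.src e₃ = p (i + 1) ∧ G.tgt e₃ = p (i + 1)) := by
    rintro ⟨h1, h2⟩
    simp [h1, h2] at hde₃
  have hflow := flow_at G σ f hf (p (i + 1))
  rw [← Finset.add_sum_erase _ _ (Finset.mem_univ (pe i)),
    ← Finset.add_sum_erase _ _ hmem2] at hflow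
  beta_reduce at hflow
  have hrest : ∑ e ∈ (Finset.univ.erase (pe i)).erase (pe (i + 1)),
      eps G σ (p (i + 1)) e • f e = eps G σ (p (i + 1)) e₃ • f e₃ := by
    apply Finset.sum_eq_single_of_mem e₃ he₃s
    intro b hb hbne
    have hzb := hdz b hb hbne
    have hsb : G.src b ≠ p (i + 1) := by intro h; simp [h] at hzb
    have htb : G.tgt b ≠ p (i + 1) := by intro h; simp [h] at hzb
    simp [eps, hsb, htb]
  rw [hrest, heps0, heps1] at hflow
  have hdiff : f (pe (i + 1)) - f (pe i) = (-(eps G σ (p (i + 1)) e₃)) • f e₃ := by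
    have h2 : f (pe (i + 1)) - f (pe i) + eps G σ (p (i + 1)) e₃ • f e₃ = 0 := by
      rw [← hflow]
      simp only [neg_smul, one_smul]
      abel
    rw [neg_smul]
    exact eq_neg_of_add_eq_zero_left h2
  have hcap3 := hthird (i + 1) (by omega) hi1 e₃ (by simpa using he₃ne0) he₃ne1 hend
  have hfR : f e₃ ∈ img (Set.Ioo (1 : ℝ) 4) := by
    have h := hcap3 (hfc e₃)
    rwa [openArc_eq 1 4 (by norm_num) (by norm_num)] at h
  have hcpm : eps G σ (p (i + 1)) e₃ = 1 ∨ eps G σ (p (i + 1)) e₃ = -1 := by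
    rcases hend with h | h
    · have htne : G.tgt e₃ ≠ p (i + 1) := fun h2 => hnotboth ⟨h, h2⟩
      rcases Int.units_eq_one_or (σ e₃) with hs | hs
      · left; simp [eps, h, htne, hs]
      · right; simp [eps, h, htne, hs]
    · have hsne : G.src e₃ ≠ p (i + 1) := fun h2 => hnotboth ⟨h2, h⟩
      rcases Int.units_eq_one_or (σ e₃) with hs | hs
      · right; simp [eps, h, hsne, hs]
      · left; simp [eps, h, hsne, hs]
  have hR : f (pe (i + 1)) - f (pe i) ∈ img (Set.Ioo (1 : ℝ) 4) := by
    rcases hcpm with h | h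
    · rw [hdiff, h]
      simpa using R_symm _ hfR
    · rw [hdiff, h]
      simpa using hfR
  have hx := hfc (pe i)
  rw [hcapA i him, hA, openArc_eq (n : ℝ) ((n : ℝ) + 1) (by linarith) (by linarith),
    openArc_eq (-(n : ℝ) - 1) (-(n : ℝ)) (by linarith) (by linarith), Set.mem_union] at hx
  have hy := hfc (pe (i + 1))
  rw [hcapA (i + 1) hi1, hA, openArc_eq (n : ℝ) ((n : ℝ) + 1) (by linarith) (by linarith),
    openArc_eq (-(n : ℝ) - 1) (-(n : ℝ)) (by linarith) (by linarith), Set.mem_union] at hy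
  rw [openArc_eq (n : ℝ) ((n : ℝ) + 1) (by linarith) (by linarith),
    openArc_eq (-(n : ℝ) - 1) (-(n : ℝ)) (by linarith) (by linarith)]
  have hP : ((n : ℝ) + 1 : ℝ) ≤ (n : ℝ) + 1 := le_rfl
  have hQ : (-(n : ℝ) : ℝ) ≤ (-(n : ℝ) - 1) + 1 := by linarith
  constructor
  · constructor
    · intro hxP
      rcases hy with hyP | hyQ
      · exact absurd hR (diff_not_mem_R _ _ hP _ _ hxP hyP)
      · exact hyQ
    · intro hyQ
      rcases hx with hxP | hxQ
      · exact hxP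
      · exact absurd hR (diff_not_mem_R _ _ hQ _ _ hxQ hyQ)
  · constructor
    · intro hxQ
      rcases hy with hyP | hyQ
      · exact hyP
      · exact absurd hR (diff_not_mem_R _ _ hQ _ _ hxQ hyQ)
    · intro hyP
      rcases hx with hxP | hxQ
      · exact absurd hR (diff_not_mem_R _ _ hP _ _ hxP hyP)
      · exact hxQ
end

section
/- Let G be a capacitated graph containing an odd cycle C all of whose vertices have degree 3 in G, such that all edges of C carry the same capacity A, where A is a symmetric union of exactly two open integer unit intervals of ℝ/5ℤ (i.e., Me(A) = 2), and the third edge incident with each vertex of C has capacity contained in (1,4). Then the deletion of an edge uv of C yields a capacitated g-edge q = G_{u,v} whose open 5-capacity satisfies CP_5(q) ⊆ ℝ/5ℤ ∖ σ(A), where σ(A) denotes the topological closure of A. -/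
open Finset

/-!
Put the deleted edge back, carrying the value `t ∈ closure A` of the new edge: this gives a flow
of `G`. Read along the cycle, its values lie in `closure A = [n, n+1] ∪ [-n-1, -n]`, and at every
cycle vertex the next value is the previous one plus the value of the third edge, an element of
`(1, 4)`. Adding such an element moves a point of a closed unit arc off that arc, so consecutive
values alternate between the two arcs, which is impossible around a cycle of odd length.
-/

lemma Nat.add_one_mod_of_lt {j m : ℕ} (hj : j < m) :
    (j + 1) % m = if j + 1 = m then 0 else j + 1 := by
  split_ifs with h
  · simp [h]
  · exact Nat.mod_eq_of_lt (by omega)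

lemma Nat.even_of_iff_not_succ {m : ℕ} {P : ℕ → Prop} (hstep : ∀ j < m, (P (j + 1) ↔ ¬ P j))
    (hm : P m ↔ P 0) : Even m := by
  have key : ∀ k ≤ m, (P k ↔ (Even k ↔ P 0)) := by
    intro k
    induction k with
    | zero => simp
    | succ k ih =>
      intro hk
      rw [hstep k (by omega), ih (by omega), Nat.even_add_one]
      tauto
  have := key m le_rfl
  tauto

lemma units_zsmul_mem_of_neg_mem {M : Type*} [AddCommGroup M] {S : Set M}
    (hS : ∀ x ∈ S, -x ∈ S) (u : ℤˣ) {x : M} (hx : x ∈ S) : (u : ℤ) • x ∈ S := by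
  rcases Int.units_eq_one_or u with rfl | rfl
  · simpa using hx
  · simpa using hS x hx

namespace AddCircle

variable {p : ℝ}

lemma image_coe_Icc_add_notMem {a w : ℝ} {x c : AddCircle p}
    (hx : x ∈ ((↑) : ℝ → AddCircle p) '' Set.Icc a (a + w))
    (hc : c ∈ ((↑) : ℝ → AddCircle p) '' Set.Ioo w (p - w)) :
    x + c ∉ ((↑) : ℝ → AddCircle p) '' Set.Icc a (a + w) := by
  rintro ⟨b, ⟨hb₁, hb₂⟩, hb⟩
  obtain ⟨s, ⟨hs₁, hs₂⟩, rfl⟩ := hx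
  obtain ⟨d, ⟨hd₁, hd₂⟩, rfl⟩ := hc
  -- `s + d - b` lies strictly between `0` and `p`, so it cannot be a multiple of `p`
  obtain ⟨k, hk⟩ := (coe_eq_zero_iff p).1 (show ((s + d - b : ℝ) : AddCircle p) = 0 by
    rw [coe_sub, coe_add, hb, sub_self])
  rw [zsmul_eq_mul] at hk
  have hp : 0 < p := by linarith
  have hk₀ : (0 : ℝ) < k := pos_of_mul_pos_left (by linarith) hp.le
  have hk₁ : (k : ℝ) < 1 := lt_of_mul_lt_mul_right (by linarith) hp.le
  have : (0 : ℤ) < k ∧ k < 1 := ⟨by exact_mod_cast hk₀, by exact_mod_cast hk₁⟩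
  omega

lemma neg_mem_image_coe_Icc {a b : ℝ} {x : AddCircle p}
    (hx : x ∈ ((↑) : ℝ → AddCircle p) '' Set.Icc a b) :
    -x ∈ ((↑) : ℝ → AddCircle p) '' Set.Icc (-b) (-a) := by
  obtain ⟨s, ⟨hs₁, hs₂⟩, rfl⟩ := hx
  exact ⟨-s, ⟨neg_le_neg hs₂, neg_le_neg hs₁⟩, coe_neg p⟩

lemma add_mem_image_coe_Icc_iff {a b w : ℝ} {x c : AddCircle p}
    (hx : x ∈ ((↑) : ℝ → AddCircle p) '' Set.Icc a (a + w) ∪ (↑) '' Set.Icc b (b + w))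
    (hc : c ∈ ((↑) : ℝ → AddCircle p) '' Set.Ioo w (p - w))
    (hxc : x + c ∈ ((↑) : ℝ → AddCircle p) '' Set.Icc a (a + w) ∪ (↑) '' Set.Icc b (b + w)) :
    x + c ∈ ((↑) : ℝ → AddCircle p) '' Set.Icc a (a + w) ↔
      x ∉ ((↑) : ℝ → AddCircle p) '' Set.Icc a (a + w) := by
  refine ⟨fun hxca hxa => image_coe_Icc_add_notMem hxa hc hxca, fun hxa => ?_⟩
  have hxb := hx.resolve_left hxa
  exact hxc.resolve_right (image_coe_Icc_add_notMem hxb hc)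

lemma neg_mem_image_coe_Icc_union {a w : ℝ} {x : AddCircle p}
    (hx : x ∈ ((↑) : ℝ → AddCircle p) '' Set.Icc a (a + w) ∪ (↑) '' Set.Icc (-a - w) (-a - w + w)) :
    -x ∈ ((↑) : ℝ → AddCircle p) '' Set.Icc a (a + w) ∪ (↑) '' Set.Icc (-a - w) (-a - w + w) := by
  rcases hx with hx | hx <;> have := neg_mem_image_coe_Icc hx
  · exact .inr (by convert this using 3 <;> ring)
  · exact .inl (by convert this using 3 <;> ring)

lemma neg_mem_image_coe_Ioo_sub {w : ℝ} {x : AddCircle p}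
    (hx : x ∈ ((↑) : ℝ → AddCircle p) '' Set.Ioo w (p - w)) :
    -x ∈ ((↑) : ℝ → AddCircle p) '' Set.Ioo w (p - w) := by
  obtain ⟨s, ⟨hs₁, hs₂⟩, rfl⟩ := hx
  exact ⟨p - s, ⟨by linarith, by linarith⟩, by rw [coe_sub, coe_period, zero_sub]⟩

lemma closure_image_coe_Ioo {a b : ℝ} (hab : a < b) :
    closure (((↑) : ℝ → AddCircle p) '' Set.Ioo a b) = (↑) '' Set.Icc a b := by
  have hcont : Continuous ((↑) : ℝ → AddCircle p) := continuous_quotient_mk'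
  refine (closure_minimal (Set.image_mono Set.Ioo_subset_Icc_self)
    ((isCompact_Icc.image hcont).isClosed)).antisymm ?_
  rw [← closure_Ioo hab.ne]
  exact image_closure_subset_closure_image hcont

end AddCircle

lemma openArc_add {r a w : ℝ} (hw : 0 < w) (hwr : w < r) :
    openArc r a (a + w) = ((↑) : ℝ → AddCircle r) '' Set.Ioo a (a + w) := by
  have hr : 0 < r := hw.trans hwr
  have hfract : Int.fract (w / r) = w / r :=
    Int.fract_eq_self.2 ⟨by positivity, (div_lt_one hr).2 hwr⟩
  have hlen : r - Int.fract ((a - (a + w)) / r) * r = w := by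
    rw [show (a - (a + w)) / r = -(w / r) by ring, Int.fract_neg (by rw [hfract]; positivity),
      hfract]
    field_simp
    ring
  rw [openArc, hlen]

lemma openArc_sub {r w : ℝ} (hw : 0 < w) (hwr : 2 * w < r) :
    openArc r w (r - w) = ((↑) : ℝ → AddCircle r) '' Set.Ioo w (r - w) := by
  have := openArc_add (r := r) (a := w) (w := r - 2 * w) (by linarith) (by linarith)
  rwa [show w + (r - 2 * w) = r - w by ring] at this

lemma closure_openArc_union_neg {r a w : ℝ} (hw : 0 < w) (hwr : w < r) :
    closure (openArc r a (a + w) ∪ openArc r (-a - w) (-a)) =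
      ((↑) : ℝ → AddCircle r) '' Set.Icc a (a + w) ∪ (↑) '' Set.Icc (-a - w) (-a - w + w) := by
  have harc := openArc_add (r := r) (a := -a - w) hw hwr
  rw [sub_add_cancel] at harc
  rw [harc, openArc_add hw hwr, closure_union, AddCircle.closure_image_coe_Ioo (by linarith),
    AddCircle.closure_image_coe_Ioo (by linarith), sub_add_cancel]

namespace Multigraph

variable {G : Multigraph} {M : Type*} [AddCommGroup M]

def incidence (G : Multigraph) (v : G.V) (e : G.E) : ℕ :=
  (if G.src e = v then 1 else 0) + (if G.tgt e = v then 1 else 0)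

def signedIncidence (G : Multigraph) (v : G.V) (e : G.E) : ℤ :=
  (if G.src e = v then 1 else 0) - (if G.tgt e = v then 1 else 0)

/-- The value `y` carried by `e` in its reference direction, read as leaving the endpoint `a`. -/
def readFrom (G : Multigraph) (a : G.V) (e : G.E) (y : M) : M :=
  if G.src e = a then y else -y

lemma degree_eq_sum_incidence (v : G.V) : G.degree v = ∑ e, G.incidence v e := by
  rw [degree, card_filter, card_filter, ← sum_add_distrib]
  rfl

lemma IsFlow.sum_signedIncidence_smul {g : G.E → M} (hg : G.IsFlow g) (v : G.V) :
    ∑ e, G.signedIncidence v e • g e = 0 := by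
  simp only [signedIncidence, sub_smul, ite_smul, one_smul, zero_smul, sum_sub_distrib,
    ← sum_filter]
  exact sub_eq_zero.2 (hg v)

lemma signedIncidence_eq_zero_of_incidence_eq_zero {v : G.V} {e : G.E}
    (h : G.incidence v e = 0) : G.signedIncidence v e = 0 := by
  unfold incidence at h
  unfold signedIncidence
  split_ifs at h ⊢ <;> simp_all

lemma exists_unit_of_incidence_eq_one {v : G.V} {e : G.E} (h : G.incidence v e = 1) :
    (G.src e = v ∨ G.tgt e = v) ∧ ∃ u : ℤˣ, (u : ℤ) = -G.signedIncidence v e := by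
  unfold incidence at h
  unfold signedIncidence
  by_cases h₁ : G.src e = v <;> by_cases h₂ : G.tgt e = v <;>
    simp only [h₁, h₂, if_true, if_false] at h ⊢
  · simp at h
  · exact ⟨.inl trivial, -1, by simp⟩
  · exact ⟨.inr trivial, 1, by simp⟩
  · simp at h

lemma IsFlow.exists_third_edge {g : G.E → M} (hg : G.IsFlow g) {v : G.V}
    (hdeg : G.degree v = 3) {S : Finset G.E} (hS : ∑ e ∈ S, G.incidence v e = 2) :
    ∃ e₃ ∉ S, (G.src e₃ = v ∨ G.tgt e₃ = v) ∧
      ∃ u : ℤˣ, ∑ e ∈ S, G.signedIncidence v e • g e = (u : ℤ) • g e₃ := by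
  have hrest : ∑ e ∈ univ \ S, G.incidence v e = 1 := by
    have := sum_sdiff (f := G.incidence v) (subset_univ S)
    rw [← degree_eq_sum_incidence, hdeg, hS] at this
    omega
  obtain ⟨e₃, he₃, hne⟩ := exists_ne_zero_of_sum_ne_zero (hrest ▸ one_ne_zero)
  have hsplit := add_sum_erase _ (G.incidence v) he₃
  rw [hrest] at hsplit
  have hone : G.incidence v e₃ = 1 := by omega
  have hzero : ∀ e ∈ (univ \ S).erase e₃, G.incidence v e = 0 :=
    sum_eq_zero_iff.1 (by omega)
  obtain ⟨hinc, u, hu⟩ := exists_unit_of_incidence_eq_one hone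
  refine ⟨e₃, (mem_sdiff.1 he₃).2, hinc, u, ?_⟩
  have hsum := sum_sdiff (f := fun e => G.signedIncidence v e • g e) (subset_univ S)
  rw [hg.sum_signedIncidence_smul, sum_eq_single e₃ (fun e he hee => by
    rw [signedIncidence_eq_zero_of_incidence_eq_zero (hzero e (mem_erase.2 ⟨hee, he⟩)),
      zero_smul])
    (fun h => absurd he₃ h)] at hsum
  rw [hu, neg_smul]
  exact eq_neg_of_add_eq_zero_right hsum

def Joins (G : Multigraph) (e : G.E) (a b : G.V) : Prop :=
  G.src e = a ∧ G.tgt e = b ∨ G.src e = b ∧ G.tgt e = a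

lemma Joins.incidence_eq_two {e : G.E} {a : G.V} (h : G.Joins e a a) :
    G.incidence a e = 2 ∧ G.signedIncidence a e = 0 := by
  obtain ⟨h₁, h₂⟩ := h.elim id id
  simp [incidence, signedIncidence, h₁, h₂]

lemma Joins.incidence_eq_one_left {e : G.E} {a b : G.V} (h : G.Joins e a b) (hab : a ≠ b)
    (y : M) : G.incidence a e = 1 ∧ G.signedIncidence a e • y = G.readFrom a e y := by
  rcases h with ⟨h₁, h₂⟩ | ⟨h₁, h₂⟩ <;>
    simp [incidence, signedIncidence, readFrom, h₁, h₂, hab.symm]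

lemma Joins.incidence_eq_one_right {e : G.E} {a b : G.V} (h : G.Joins e a b) (hab : a ≠ b)
    (y : M) : G.incidence b e = 1 ∧ G.signedIncidence b e • y = -G.readFrom a e y := by
  rcases h with ⟨h₁, h₂⟩ | ⟨h₁, h₂⟩ <;>
    simp [incidence, signedIncidence, readFrom, h₁, h₂, hab, hab.symm]

structure IsCycle (G : Multigraph) (m : ℕ) (p : ℕ → G.V) (pe : ℕ → G.E) : Prop where
  closed : p m = p 0
  injOn_vertex : Set.InjOn p (Set.Iio m)
  injOn_edge : Set.InjOn pe (Set.Iio m)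
  joins : ∀ i < m, G.Joins (pe i) (p i) (p (i + 1))

def cycleValue (g : G.E → M) (p : ℕ → G.V) (pe : ℕ → G.E) (j : ℕ) : M :=
  G.readFrom (p j) (pe j) (g (pe j))

lemma IsFlow.comp_equiv {H : Multigraph} {F : H.E → M} (hF : H.IsFlow F) (φ : H.E ≃ G.E)
    (ψ : H.V ≃ G.V) (hsrc : ∀ e, G.src (φ e) = ψ (H.src e))
    (htgt : ∀ e, G.tgt (φ e) = ψ (H.tgt e)) : G.IsFlow (F ∘ φ.symm) := by
  intro v
  refine (sum_equiv φ.symm (fun e => ?_) (fun _ _ => rfl)).trans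
    ((hF (ψ.symm v)).trans (sum_equiv φ.symm (fun e => ?_) (fun _ _ => rfl)).symm)
  · simp [Equiv.eq_symm_apply, ← hsrc]
  · simp [Equiv.eq_symm_apply, ← htgt]

lemma IsFlow.of_deleteEdge_addEdge {e₀ : G.E}
    {F : ((G.deleteEdge e₀).addEdge (G.src e₀) (G.tgt e₀)).E → M}
    (hF : ((G.deleteEdge e₀).addEdge (G.src e₀) (G.tgt e₀)).IsFlow F) :
    ∃ g : G.E → M, G.IsFlow g ∧ g e₀ = F none ∧ ∀ e (he : e ≠ e₀), g e = F (some ⟨e, he⟩) :=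
  ⟨F ∘ (Equiv.optionSubtypeNe e₀).symm,
    hF.comp_equiv (Equiv.optionSubtypeNe e₀) (Equiv.refl G.V) (by rintro (_ | _) <;> rfl)
      (by rintro (_ | _) <;> rfl),
    congrArg F (Equiv.optionSubtypeNe_symm_self e₀),
    fun _ he => congrArg F (Equiv.optionSubtypeNe_symm_of_ne he)⟩

namespace IsCycle

variable {m : ℕ} {p : ℕ → G.V} {pe : ℕ → G.E} (hC : G.IsCycle m p pe)
include hC

lemma vertex_add_one_mod {j : ℕ} (hj : j < m) : p ((j + 1) % m) = p (j + 1) := by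
  rw [Nat.add_one_mod_of_lt hj]
  split_ifs with h
  · rw [h, hC.closed]
  · rfl

lemma vertex_ne_succ (hm : m ≠ 1) {j : ℕ} (hj : j < m) : p j ≠ p (j + 1) := by
  intro h
  have := hC.injOn_vertex hj (Nat.mod_lt _ (by omega)) (h.trans (hC.vertex_add_one_mod hj).symm)
  rw [Nat.add_one_mod_of_lt hj] at this
  split_ifs at this <;> omega

lemma eq_or_eq_of_incident {j k : ℕ} (hj : j < m) (hk : k < m)
    (h : G.src (pe k) = p j ∨ G.tgt (pe k) = p j) : k = j ∨ (k + 1) % m = j := by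
  have hends : p k = p j ∨ p ((k + 1) % m) = p j := by
    rw [hC.vertex_add_one_mod hk]
    rcases hC.joins k hk with ⟨h₁, h₂⟩ | ⟨h₁, h₂⟩ <;> rcases h with h | h
    exacts [.inl (h₁ ▸ h), .inr (h₂ ▸ h), .inr (h₁ ▸ h), .inl (h₂ ▸ h)]
  rcases hends with h | h
  · exact .inl (hC.injOn_vertex hk hj h)
  · exact .inr (hC.injOn_vertex (Nat.mod_lt _ (by omega)) hj h)

lemma edges_at_vertex (g : G.E → M) {j : ℕ} (hj : j < m) :
    ∑ e ∈ {pe j, pe ((j + 1) % m)}, G.incidence (p (j + 1)) e = 2 ∧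
      ∑ e ∈ {pe j, pe ((j + 1) % m)}, G.signedIncidence (p (j + 1)) e • g e =
        cycleValue g p pe ((j + 1) % m) - cycleValue g p pe j := by
  by_cases hm : m = 1
  · subst hm
    obtain rfl : j = 0 := by omega
    have hloop : G.Joins (pe 0) (p 0) (p 0) := hC.closed ▸ hC.joins 0 one_pos
    simp [hC.closed, hloop.incidence_eq_two]
  set j' := (j + 1) % m with hj'_def
  have hj' : j' < m := Nat.mod_lt _ (by omega)
  have hpj' : p j' = p (j + 1) := hC.vertex_add_one_mod hj
  have hne : pe j ≠ pe j' := by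
    intro h
    have := hC.injOn_edge hj hj' h
    rw [hj'_def, Nat.add_one_mod_of_lt hj] at this
    split_ifs at this <;> omega
  obtain ⟨hin, hsg⟩ :=
    (hC.joins j hj).incidence_eq_one_right (hC.vertex_ne_succ hm hj) (g (pe j))
  obtain ⟨hin', hsg'⟩ := (hpj' ▸ hC.joins j' hj').incidence_eq_one_left
    (hpj' ▸ hC.vertex_ne_succ hm hj') (g (pe j'))
  rw [sum_pair hne, sum_pair hne, hin, hin', hsg, hsg', cycleValue, cycleValue, hpj']
  exact ⟨rfl, neg_add_eq_sub _ _⟩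

lemma exists_third_edge_step {g : G.E → M} (hg : G.IsFlow g)
    (hdeg : ∀ i < m, G.degree (p i) = 3) {j : ℕ} (hj : j < m) :
    ∃ e₃, (∀ k < m, e₃ ≠ pe k) ∧ (G.src e₃ = p ((j + 1) % m) ∨ G.tgt e₃ = p ((j + 1) % m)) ∧
      ∃ u : ℤˣ, cycleValue g p pe ((j + 1) % m) = cycleValue g p pe j + (u : ℤ) • g e₃ := by
  have hj' : (j + 1) % m < m := Nat.mod_lt _ (by omega)
  have hpj' := hC.vertex_add_one_mod hj
  obtain ⟨hin, hsg⟩ := hC.edges_at_vertex g hj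
  obtain ⟨e₃, he₃, hinc₃, u, hu⟩ := hg.exists_third_edge (hpj' ▸ hdeg _ hj') hin
  refine ⟨e₃, ?_, hpj' ▸ hinc₃, u, ?_⟩
  · rintro k hk rfl
    rcases hC.eq_or_eq_of_incident hj' hk (hpj' ▸ hinc₃) with rfl | hkj
    · exact he₃ (by simp)
    · obtain rfl : k = j := by
        rw [Nat.add_one_mod_of_lt hk, Nat.add_one_mod_of_lt hj] at hkj
        split_ifs at hkj <;> omega
      exact he₃ (by simp)
  · rw [← sub_eq_iff_eq_add', ← hsg, hu]

theorem even_of_isFlow {g : G.E → M} (hg : G.IsFlow g) (hdeg : ∀ i < m, G.degree (p i) = 3)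
    {K H I : Set M} (hK : ∀ x ∈ K, -x ∈ K) (hH : ∀ x ∈ H, -x ∈ H)
    (hflip : ∀ x ∈ K, ∀ c ∈ H, x + c ∈ K → (x + c ∈ I ↔ x ∉ I))
    (hcycle : ∀ j < m, g (pe j) ∈ K)
    (hthird : ∀ j < m, ∀ e, (∀ k < m, e ≠ pe k) → (G.src e = p j ∨ G.tgt e = p j) → g e ∈ H) :
    Even m := by
  have hval : ∀ j < m, cycleValue g p pe j ∈ K := by
    intro j hj
    unfold cycleValue readFrom
    split_ifs
    exacts [hcycle j hj, hK _ (hcycle j hj)]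
  refine Nat.even_of_iff_not_succ (P := fun j => cycleValue g p pe (j % m) ∈ I) (fun j hj => ?_)
    (by simp)
  have hj' : (j + 1) % m < m := Nat.mod_lt _ (by omega)
  obtain ⟨e₃, hnot, hinc₃, u, hstep⟩ := hC.exists_third_edge_step hg hdeg hj
  have hc : (u : ℤ) • g e₃ ∈ H := units_zsmul_mem_of_neg_mem hH u (hthird _ hj' e₃ hnot hinc₃)
  simp only [Nat.mod_eq_of_lt hj, hstep]
  exact hflip _ (hval j hj) _ hc (hstep ▸ hval _ hj')

end IsCycle

end Multigraph

theorem odd_cycle_deleted_capacity_general (G : Multigraph) (cap : G.E → Set (AddCircle (5 : ℝ)))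
    (m : ℕ) (hodd : Odd m) (p : ℕ → G.V) (pe : ℕ → G.E)
    (hclosed : p m = p 0)
    (hinjV : Set.InjOn p (Set.Iio m)) (hinjE : Set.InjOn pe (Set.Iio m))
    (hinc : ∀ i < m, (G.src (pe i) = p i ∧ G.tgt (pe i) = p (i + 1)) ∨
      (G.src (pe i) = p (i + 1) ∧ G.tgt (pe i) = p i))
    (n : ℤ) (A : Set (AddCircle (5 : ℝ)))
    (hA : A = openArc 5 (n : ℝ) ((n : ℝ) + 1) ∪ openArc 5 (-(n : ℝ) - 1) (-(n : ℝ)))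
    (hcapA : ∀ i < m, cap (pe i) = A)
    (hdeg : ∀ i < m, G.degree (p i) = 3)
    (hthird : ∀ i < m, ∀ e : G.E, (∀ j < m, e ≠ pe j) →
      (G.src e = p i ∨ G.tgt e = p i) → cap e ⊆ openArc 5 1 4) :
    ∀ i < m,
      CPcap 5 (G.deleteEdge (pe i)) (fun e => cap e.1)
          (G.src (pe i)) (G.tgt (pe i)) ⊆ (closure A)ᶜ := by
  rintro i hi t ⟨σ, f, hflow, hcap, rfl⟩ ht
  have hclA := hA ▸ closure_openArc_union_neg (r := 5) (a := n) one_pos (by norm_num)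
  have hH : openArc 5 1 4 = ((↑) : ℝ → AddCircle (5 : ℝ)) '' Set.Ioo 1 (5 - 1) := by
    convert openArc_sub (r := 5) one_pos (by norm_num) using 2
    norm_num
  have hK : ∀ x ∈ closure A, -x ∈ closure A := by
    rw [hclA]
    exact fun x hx => AddCircle.neg_mem_image_coe_Icc_union hx
  have hHneg : ∀ x ∈ openArc 5 1 4, -x ∈ openArc 5 1 4 := by
    rw [hH]
    exact fun x hx => AddCircle.neg_mem_image_coe_Ioo_sub hx
  obtain ⟨g, hg, hg₀, hg_ne⟩ := Multigraph.IsFlow.of_deleteEdge_addEdge hflow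
  refine Nat.not_even_iff_odd.2 hodd (Multigraph.IsCycle.even_of_isFlow
    ⟨hclosed, hinjV, hinjE, hinc⟩ hg hdeg (I := (↑) '' Set.Icc (n : ℝ) (n + 1)) hK hHneg
    (fun x hx c hc hxc => ?_) (fun j hj => ?_) (fun j hj e he hej => ?_))
  · rw [hclA] at hx hxc
    rw [hH] at hc
    exact AddCircle.add_mem_image_coe_Icc_iff hx hc hxc
  · by_cases hji : j = i
    · subst hji
      rw [hg₀]
      exact units_zsmul_mem_of_neg_mem hK _ ht
    · have hne : pe j ≠ pe i := fun h => hji (hinjE hj hi h)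
      rw [hg_ne _ hne]
      exact units_zsmul_mem_of_neg_mem hK _ (subset_closure (hcapA j hj ▸ hcap ⟨pe j, hne⟩))
  · rw [hg_ne _ (he i hi)]
    exact units_zsmul_mem_of_neg_mem hHneg _ (hthird j hj e he hej (hcap ⟨e, he i hi⟩))

/-- In the setting of the odd-cycle corollary (odd cycle of
degree-3 vertices, all its edges of the same capacity `A` of measure 2, third
edges of capacity contained in `(1,4)`), deleting an edge `uv` of the cycle
yields a capacitated g-edge whose open 5-capacity is contained in the
complement of the topological closure of `A`. -/
theorem odd_cycle_deleted_capacity (G : Multigraph) (cap : G.E → Set (AddCircle (5 : ℝ)))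
    (m : ℕ) (hodd : Odd m) (p : ℕ → G.V) (pe : ℕ → G.E)
    (hclosed : p m = p 0)
    (hinjV : Set.InjOn p (Set.Iio m)) (hinjE : Set.InjOn pe (Set.Iio m))
    (hinc : ∀ i < m, (G.src (pe i) = p i ∧ G.tgt (pe i) = p (i + 1)) ∨
      (G.src (pe i) = p (i + 1) ∧ G.tgt (pe i) = p i))
    (n : ℤ) (A : Set (AddCircle (5 : ℝ)))
    (hA : A = openArc 5 (n : ℝ) ((n : ℝ) + 1) ∪ openArc 5 (-(n : ℝ) - 1) (-(n : ℝ)))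
    (htwo : openArc 5 (n : ℝ) ((n : ℝ) + 1) ≠ openArc 5 (-(n : ℝ) - 1) (-(n : ℝ)))
    (hcapA : ∀ i < m, cap (pe i) = A)
    (hdeg : ∀ i < m, G.degree (p i) = 3)
    (hthird : ∀ i < m, ∀ e : G.E, (∀ j < m, e ≠ pe j) →
      (G.src e = p i ∨ G.tgt e = p i) → cap e ⊆ openArc 5 1 4) :
    ∀ i < m,
      CPcap 5 (G.deleteEdge (pe i)) (fun e => cap e.1)
          (G.src (pe i)) (G.tgt (pe i)) ⊆ (closure A)ᶜ :=
  odd_cycle_deleted_capacity_general G cap m hodd p pe hclosed hinjV hinjE hinc n A hA hcapA hdeg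
    hthird
end
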